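/- arXiv:1810.10207 — 7 statements merged into one kernel-verified Lean document; each statement's English description precedes it below -/
import Mathlib

section
/- Let φ : ℝ^m → ℝ be a convex function whose subgradients are uniformly bounded in norm by M, and let g : ℝ^p → ℝ^m be a smooth map satisfying ‖g(x) − g(x') − ∇g(x')(x − x')‖ ≤ (L/2)‖x − x'‖² for all x,x'. Then the composition φ∘g is (LM)-weakly convex: φ(g(x)) ≥ φ(g(x')) + ⟨∇φ(g(x'))ᵀ∇g(x'), x − x'⟩ − (LM/2)‖x − x'‖² for all x, x' and any subgradient ∇φ(g(x')) of φ at g(x'). -/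
open RealInnerProductSpace

theorem le_of_subgradient_of_norm_sub_sub_le {F : Type*} [NormedAddCommGroup F]
    [InnerProductSpace ℝ F] {f : F → ℝ} {u v a d : F} {M ε : ℝ}
    (hsub : f u + ⟪d, v - u⟫ ≤ f v) (hd : ‖d‖ ≤ M) (ha : ‖v - u - a‖ ≤ ε) :
    f u + ⟪d, a⟫ - M * ε ≤ f v := by
  have hsplit : ⟪d, v - u⟫ = ⟪d, a⟫ + ⟪d, v - u - a⟫ := by
    rw [← inner_add_right, add_sub_cancel]
  have herror : -(M * ε) ≤ ⟪d, v - u - a⟫ :=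
    calc -(M * ε) ≤ -(‖d‖ * ‖v - u - a‖) :=
          neg_le_neg (mul_le_mul hd ha (norm_nonneg _) ((norm_nonneg d).trans hd))
      _ ≤ ⟪d, v - u - a⟫ := neg_le_of_abs_le (abs_real_inner_le_norm d _)
  linarith

theorem stmt3_general {E F' : Type*} [NormedAddCommGroup E] [InnerProductSpace ℝ E]
    [NormedAddCommGroup F'] [InnerProductSpace ℝ F']
    (φ : F' → ℝ) (M L : ℝ)
    (Dφ : F' → F')
    (hconv : ∀ u v : F', φ v ≥ φ u + ⟪Dφ u, v - u⟫)
    (hbound : ∀ u : F', ‖Dφ u‖ ≤ M)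
    (g : E → F') (Dg : E → E →L[ℝ] F')
    (hsmooth : ∀ x x' : E, ‖g x - g x' - Dg x' (x - x')‖ ≤ L / 2 * ‖x - x'‖ ^ 2) :
    ∀ x x' : E,
      φ (g x) ≥ φ (g x') + ⟪Dφ (g x'), Dg x' (x - x')⟫ - L * M / 2 * ‖x - x'‖ ^ 2 := by
  intro x x'
  have h := le_of_subgradient_of_norm_sub_sub_le (hconv (g x') (g x)) (hbound (g x'))
    (hsmooth x x')
  linarith

/-- If `φ` is convex with subgradients bounded by `M` and `g` is a smooth map, then
`φ ∘ g` is `(L M)`-weakly convex. -/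
theorem stmt3 {E F' : Type*} [NormedAddCommGroup E] [InnerProductSpace ℝ E]
    [NormedAddCommGroup F'] [InnerProductSpace ℝ F']
    (φ : F' → ℝ) (M L : ℝ) (hM : 0 ≤ M) (hL : 0 ≤ L)
    (Dφ : F' → F')
    (hconv : ∀ u v : F', φ v ≥ φ u + ⟪Dφ u, v - u⟫)
    (hbound : ∀ u : F', ‖Dφ u‖ ≤ M)
    (g : E → F') (Dg : E → E →L[ℝ] F')
    (hsmooth : ∀ x x' : E, ‖g x - g x' - Dg x' (x - x')‖ ≤ L / 2 * ‖x - x'‖ ^ 2) :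
    ∀ x x' : E,
      φ (g x) ≥ φ (g x') + ⟪Dφ (g x'), Dg x' (x - x')⟫ - L * M / 2 * ‖x - x'‖ ^ 2 :=
  stmt3_general φ M L Dφ hconv hbound g Dg hsmooth
end

section
/- Let φ : ℝ → ℝ be a non-decreasing L-smooth function, g : ℝ^p → ℝ be convex and G_x-Lipschitz. Then x ↦ φ(g(x) − c) is (L G_x²)-weakly convex for any constant c: φ(g(x) − c) ≥ φ(g(x') − c) + φ'(g(x') − c)⟨∇g(x'), x − x'⟩ − (L G_x²/2)‖x − x'‖² where ∇g(x') is any subgradient of g at x'. -/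
open RealInnerProductSpace

/- Since `φ' ≥ 0` by monotonicity, the subgradient inequality `⟪dg x', x - x'⟫ ≤ g x - g x'` can be
multiplied by `φ' (g x' - c)` and fed into the smoothness inequality of `φ` at `g x' - c`; the
Lipschitz bound turns its quadratic term `|g x - g x'|²` into `Gx² ‖x - x'‖²`. -/

lemma Monotone.slope_nonneg_of_quadratic_lower_bound {φ : ℝ → ℝ} {b s L : ℝ} (hL : 0 ≤ L)
    (hmono : Monotone φ) (hbound : ∀ a, φ a ≥ φ b + s * (a - b) - L / 2 * |a - b| ^ 2) :
    0 ≤ s := by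
  by_contra! hs
  -- for this step `t` the decrease `-s t` beats the quadratic allowance `L t² / 2`
  set t := -s / (L + 1)
  have ht : 0 < t := div_pos (by linarith) (by linarith)
  have hLt : L * t < -s := by
    have : (L + 1) * t = -s := by simp only [t]; field_simp
    nlinarith
  have hle : φ (b - t) ≤ φ b := hmono (by linarith)
  have hb := hbound (b - t)
  rw [show b - t - b = -t by ring, abs_neg, abs_of_pos ht] at hb
  nlinarith

lemma sq_abs_sub_le_of_lipschitz {E : Type*} [NormedAddCommGroup E] {g : E → ℝ} {G : ℝ}
    (hlip : ∀ x x' : E, |g x - g x'| ≤ G * ‖x - x'‖) (x x' : E) :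
    |g x - g x'| ^ 2 ≤ G ^ 2 * ‖x - x'‖ ^ 2 := by
  rw [← mul_pow]
  exact pow_le_pow_left₀ (abs_nonneg _) (hlip x x') 2

/-- If `φ : ℝ → ℝ` is non-decreasing and `L`-smooth, and `g` is convex and `Gx`-Lipschitz,
then `x ↦ φ(g(x) - c)` is `(L Gx²)`-weakly convex. -/
theorem stmt4 {E : Type*} [NormedAddCommGroup E] [InnerProductSpace ℝ E]
    (φ : ℝ → ℝ) (φ' : ℝ → ℝ) (L Gx : ℝ) (hL : 0 ≤ L)
    (hmono : Monotone φ)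
    (hsmooth : ∀ a b : ℝ, φ a ≥ φ b + φ' b * (a - b) - L / 2 * |a - b| ^ 2)
    (g : E → ℝ) (dg : E → E)
    (hsubgrad : ∀ x x' : E, g x ≥ g x' + ⟪dg x', x - x'⟫)
    (hlip : ∀ x x' : E, |g x - g x'| ≤ Gx * ‖x - x'‖)
    (c : ℝ) :
    ∀ x x' : E,
      φ (g x - c) ≥ φ (g x' - c) + φ' (g x' - c) * ⟪dg x', x - x'⟫
        - L * Gx ^ 2 / 2 * ‖x - x'‖ ^ 2 := by
  intro x x'
  have hφ' : 0 ≤ φ' (g x' - c) :=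
    hmono.slope_nonneg_of_quadratic_lower_bound hL fun a => hsmooth a _
  have hinner : φ' (g x' - c) * ⟪dg x', x - x'⟫ ≤ φ' (g x' - c) * (g x - g x') :=
    mul_le_mul_of_nonneg_left (by linarith [hsubgrad x x']) hφ'
  have hquad : L / 2 * |g x - g x'| ^ 2 ≤ L * Gx ^ 2 / 2 * ‖x - x'‖ ^ 2 := by
    nlinarith [sq_abs_sub_le_of_lipschitz hlip x x']
  calc φ (g x - c)
      ≥ φ (g x' - c) + φ' (g x' - c) * (g x - g x') - L / 2 * |g x - g x'| ^ 2 := by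
        simpa only [sub_sub_sub_cancel_right] using hsmooth (g x - c) (g x' - c)
    _ ≥ φ (g x' - c) + φ' (g x' - c) * ⟪dg x', x - x'⟫ - L * Gx ^ 2 / 2 * ‖x - x'‖ ^ 2 := by
        linarith
end

section
/- Let Z be a convex set, F be ρ-weakly monotone arising from a ρ-weakly-convex-weakly-concave f, fix 0 < γ < 1/ρ and w = (u,v) ∈ Z, and let w̄ = (ū, v̄) be the unique solution of the strongly monotone SVI defined by F_w^γ(z) = F(z) + (1/γ)(z − w). Then dist(0, ∂_x[f(ū,v̄) + 1_X(ū)] × ∂_y[−f(ū,v̄) + 1_Y(v̄)]) ≤ ‖w − w̄‖/γ. -/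
open RealInnerProductSpace Filter

/-- The Fréchet subdifferential of a real-valued function. -/
def fsub {E : Type*} [NormedAddCommGroup E] [InnerProductSpace ℝ E]
    (h : E → ℝ) (x : E) : Set E :=
  {v | ∀ ε > (0 : ℝ), ∀ᶠ y in nhds x, h y ≥ h x + ⟪v, y - x⟫ - ε * ‖y - x‖}

/-- The Fréchet subdifferential of an extended-real-valued function. -/
def fsubE {E : Type*} [NormedAddCommGroup E] [InnerProductSpace ℝ E]
    (h : E → EReal) (x : E) : Set E :=
  {v | ∀ ε > (0 : ℝ), ∀ᶠ y in nhds x,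
    h y ≥ h x + ((⟪v, y - x⟫ - ε * ‖y - x‖ : ℝ) : EReal)}

/-- The indicator function of a set, taking value `0` on the set and `+∞` outside. -/
noncomputable def ind {E : Type*} (X : Set E) (x : E) : EReal :=
  open Classical in if x ∈ X then 0 else ⊤

/-!
The SVI at `w̄` says that `-(ξ + (w̄ - w)/γ)` lies in the normal cone of `Z` at `w̄`. Adding a
normal vector of `X` to a Fréchet subgradient of `h` gives a Fréchet subgradient of `h + 1_X`,
so the two components of `(w - w̄)/γ` are subgradients of the two partial functions, and its
norm bounds the distance from the origin to the product of the two subdifferentials.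
-/

section Subdifferential

variable {E : Type*} [NormedAddCommGroup E] [InnerProductSpace ℝ E]

lemma add_mem_fsubE_add_ind {h : E → ℝ} {X : Set E} {x ξ ν : E} (hx : x ∈ X)
    (hξ : ξ ∈ fsub h x) (hν : ∀ y ∈ X, ⟪ν, y - x⟫ ≤ 0) :
    ξ + ν ∈ fsubE (fun y => ((h y : ℝ) : EReal) + ind X y) x := by
  intro ε hε
  filter_upwards [hξ ε hε] with y hy
  by_cases hy' : y ∈ X
  · simp only [ind, hx, hy', if_true, add_zero, ← EReal.coe_add, ge_iff_le, EReal.coe_le_coe_iff]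
    linarith [hν y hy', inner_add_left (𝕜 := ℝ) ξ ν (y - x)]
  · simp [ind, hy']

lemma infDist_zero_fsubE_add_ind_le {h : E → ℝ} {X : Set E} {x₀ u ξ : E} {γ : ℝ}
    (hγ : 0 < γ) (hx₀ : x₀ ∈ X) (hξ : ξ ∈ fsub h x₀)
    (hvi : ∀ x ∈ X, 0 ≤ ⟪ξ + (1 / γ) • (x₀ - u), x - x₀⟫) :
    Metric.infDist 0 (fsubE (fun x => ((h x : ℝ) : EReal) + ind X x) x₀) ≤ ‖u - x₀‖ / γ := by
  have hmem : ξ + -(ξ + (1 / γ) • (x₀ - u)) ∈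
      fsubE (fun x => ((h x : ℝ) : EReal) + ind X x) x₀ :=
    add_mem_fsubE_add_ind hx₀ hξ fun x hx => by
      rw [inner_neg_left]
      linarith [hvi x hx]
  have hvec : ξ + -(ξ + (1 / γ) • (x₀ - u)) = (1 / γ) • (u - x₀) := by
    rw [smul_sub, smul_sub]
    abel
  calc Metric.infDist 0 _ ≤ dist 0 (ξ + -(ξ + (1 / γ) • (x₀ - u))) :=
        Metric.infDist_le_dist_of_mem hmem
    _ = ‖u - x₀‖ / γ := by
        rw [dist_zero_left, hvec, norm_smul, Real.norm_of_nonneg (by positivity)]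
        ring

end Subdifferential

lemma sqrt_sq_add_sq_le_sqrt_div {a b c d γ : ℝ} (hγ : 0 < γ) (ha : 0 ≤ a) (hb : 0 ≤ b)
    (hac : a ≤ c / γ) (hbd : b ≤ d / γ) :
    Real.sqrt (a ^ 2 + b ^ 2) ≤ Real.sqrt (c ^ 2 + d ^ 2) / γ := by
  rw [← Real.sqrt_sq hγ.le, ← Real.sqrt_div' _ (by positivity), add_div, ← div_pow, ← div_pow]
  gcongr

theorem stmt5_general {E G : Type*} [NormedAddCommGroup E] [InnerProductSpace ℝ E]
    [NormedAddCommGroup G] [InnerProductSpace ℝ G]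
    (X : Set E) (Y : Set G)
    (f : E → G → ℝ)
    (γ : ℝ) (hγ0 : 0 < γ)
    (u : E) (v : G)
    (ub : E) (vb : G) (hub : ub ∈ X) (hvb : vb ∈ Y)
    (ξx : E) (ξy : G)
    (hξx : ξx ∈ fsub (fun x => f x vb) ub)
    (hξy : ξy ∈ fsub (fun y => -f ub y) vb)
    (hSVI : ∀ x ∈ X, ∀ y ∈ Y,
      ⟪ξx + (1 / γ) • (ub - u), x - ub⟫ + ⟪ξy + (1 / γ) • (vb - v), y - vb⟫ ≥ 0) :
    Real.sqrt
        ((Metric.infDist (0 : E)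
            (fsubE (fun x => ((f x vb : ℝ) : EReal) + ind X x) ub)) ^ 2 +
          (Metric.infDist (0 : G)
            (fsubE (fun y => ((-f ub y : ℝ) : EReal) + ind Y y) vb)) ^ 2)
      ≤ Real.sqrt (‖u - ub‖ ^ 2 + ‖v - vb‖ ^ 2) / γ := by
  have hx := infDist_zero_fsubE_add_ind_le hγ0 hub hξx fun x hx => by
    simpa using hSVI x hx vb hvb
  have hy := infDist_zero_fsubE_add_ind_le hγ0 hvb hξy fun y hy => by
    simpa using hSVI ub hub y hy
  exact sqrt_sq_add_sq_le_sqrt_div hγ0 Metric.infDist_nonneg Metric.infDist_nonneg hx hy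

/-- If `w̄ = (ū, v̄)` solves the strongly monotone SVI defined by
`F_w^γ(z) = F(z) + (1/γ)(z - w)`, then
`dist(0, ∂ₓ[f(ū,v̄) + 1_X(ū)] × ∂_y[-f(ū,v̄) + 1_Y(v̄)]) ≤ ‖w - w̄‖ / γ`. -/
theorem stmt5 {E G : Type*} [NormedAddCommGroup E] [InnerProductSpace ℝ E]
    [NormedAddCommGroup G] [InnerProductSpace ℝ G]
    (X : Set E) (Y : Set G) (hXconv : Convex ℝ X) (hXcl : IsClosed X)
    (hYconv : Convex ℝ Y) (hYcl : IsClosed Y)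
    (f : E → G → ℝ) (ρ : ℝ) (hρ : 0 < ρ)
    (hwc : ∀ y ∈ Y, ConvexOn ℝ X (fun x => f x y + ρ / 2 * ‖x‖ ^ 2))
    (hwcc : ∀ x ∈ X, ConcaveOn ℝ Y (fun y => f x y - ρ / 2 * ‖y‖ ^ 2))
    (γ : ℝ) (hγ0 : 0 < γ) (hγ : γ < 1 / ρ)
    (u : E) (v : G) (hu : u ∈ X) (hv : v ∈ Y)
    (ub : E) (vb : G) (hub : ub ∈ X) (hvb : vb ∈ Y)
    (ξx : E) (ξy : G)
    (hξx : ξx ∈ fsub (fun x => f x vb) ub)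
    (hξy : ξy ∈ fsub (fun y => -f ub y) vb)
    (hSVI : ∀ x ∈ X, ∀ y ∈ Y,
      ⟪ξx + (1 / γ) • (ub - u), x - ub⟫ + ⟪ξy + (1 / γ) • (vb - v), y - vb⟫ ≥ 0) :
    Real.sqrt
        ((Metric.infDist (0 : E)
            (fsubE (fun x => ((f x vb : ℝ) : EReal) + ind X x) ub)) ^ 2 +
          (Metric.infDist (0 : G)
            (fsubE (fun y => ((-f ub y : ℝ) : EReal) + ind Y y) vb)) ^ 2)
      ≤ Real.sqrt (‖u - ub‖ ^ 2 + ‖v - vb‖ ^ 2) / γ :=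
  stmt5_general X Y f γ hγ0 u v ub vb hub hvb ξx ξy hξx hξy hSVI
end

section
/- Let F : Z → ℝ^d be a single-valued, monotone, L-Lipschitz continuous mapping on a compact convex set Z of diameter D, let w* be a solution of SVI(F,Z), and let ẑ ∈ Z be arbitrary. Define z̄ = Proj_Z(ẑ − η F(ẑ)) with η = 1/(√2 L). Then max_{z ∈ Z} ⟨F(z̄), z̄ − z⟩ ≤ D L (2 + √2) ‖ẑ − w*‖. -/
open RealInnerProductSpace

/-- `p` is the Euclidean projection of `x` onto the convex set `Z`. -/
def IsProjOn {E : Type*} [NormedAddCommGroup E] [InnerProductSpace ℝ E]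
    (Z : Set E) (x p : E) : Prop :=
  p ∈ Z ∧ ∀ z ∈ Z, ⟪x - p, z - p⟫ ≤ 0

/-!
Write `η = 1/(√2 L)`. The projection inequality at `w*`, together with the SVI condition at `w*` and
the Lipschitz bound, gives `‖ẑ - z̄‖² ≤ (1 + (ηL)²)‖ẑ - w*‖² ≤ 2‖ẑ - w*‖²`. At an arbitrary `z` it gives
`⟨F(ẑ), z̄ - z⟩ ≤ η⁻¹‖ẑ - z̄‖ D`, and replacing `F(z̄)` by `F(ẑ)` costs `L‖ẑ - z̄‖ D`. Hence the gap is at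
most `(1 + √2) L D ‖ẑ - z̄‖ ≤ (2 + √2) D L ‖ẑ - w*‖`.
-/

namespace IsProjOn

variable {E : Type*} [NormedAddCommGroup E] [InnerProductSpace ℝ E]
  {Z : Set E} {F : E → E} {x p w y : E} {η L : ℝ}

theorem inner_sub_le_smul_inner {v : E} (hp : IsProjOn Z (x - η • v) p) (hy : y ∈ Z) :
    ⟪x - p, y - p⟫ ≤ η * ⟪v, y - p⟫ := by
  have h := hp.2 y hy
  rw [show x - η • v - p = (x - p) - η • v by abel, inner_sub_left, real_inner_smul_left] at h
  linarith

theorem norm_sub_sq_le_of_svi (hp : IsProjOn Z (x - η • F x) p) (hη : 0 ≤ η)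
    (hw : w ∈ Z) (hsvi : ∀ z ∈ Z, 0 ≤ ⟪F w, z - w⟫)
    (hlip : ‖F x - F w‖ ≤ L * ‖x - w‖) :
    ‖x - p‖ ^ 2 ≤ (1 + (η * L) ^ 2) * ‖x - w‖ ^ 2 := by
  have hstep := hp.inner_sub_le_smul_inner hw
  have hpolar : ⟪x - p, w - p⟫ = (‖x - p‖ ^ 2 + ‖w - p‖ ^ 2 - ‖x - w‖ ^ 2) / 2 := by
    have h := norm_sub_sq_real (x - p) (w - p)
    rw [show x - p - (w - p) = x - w by abel] at h
    linarith
  have hsvi_p : ⟪F w, w - p⟫ ≤ 0 := by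
    rw [← neg_sub p w, inner_neg_right, neg_nonpos]
    exact hsvi p hp.1
  have hcs : ⟪F x - F w, w - p⟫ ≤ L * ‖x - w‖ * ‖w - p‖ :=
    (real_inner_le_norm _ _).trans (mul_le_mul_of_nonneg_right hlip (norm_nonneg _))
  have hFx : ⟪F x, w - p⟫ ≤ L * ‖x - w‖ * ‖w - p‖ := by
    rw [← sub_add_cancel (F x) (F w), inner_add_left]
    linarith
  have hmul := mul_le_mul_of_nonneg_left hFx hη
  nlinarith [sq_nonneg (‖w - p‖ - η * L * ‖x - w‖)]

theorem inner_sub_le_of_lipschitz (hp : IsProjOn Z (x - η • F x) p) (hη : 0 < η)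
    (hy : y ∈ Z) (hlip : ‖F p - F x‖ ≤ L * ‖p - x‖) :
    ⟪F p, p - y⟫ ≤ (L + η⁻¹) * ‖x - p‖ * ‖p - y‖ := by
  have hcs : ⟪F p - F x, p - y⟫ ≤ L * ‖x - p‖ * ‖p - y‖ := by
    rw [norm_sub_rev p x] at hlip
    exact (real_inner_le_norm _ _).trans (mul_le_mul_of_nonneg_right hlip (norm_nonneg _))
  have hFx : η * ⟪F x, p - y⟫ ≤ ‖x - p‖ * ‖p - y‖ := by
    have hstep := hp.inner_sub_le_smul_inner hy
    rw [← neg_sub p y, inner_neg_right, inner_neg_right] at hstep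
    linarith [real_inner_le_norm (x - p) (p - y)]
  have hFx' : ⟪F x, p - y⟫ ≤ η⁻¹ * (‖x - p‖ * ‖p - y‖) := by
    rwa [le_inv_mul_iff₀ hη]
  rw [← sub_add_cancel (F p) (F x), inner_add_left]
  linarith

end IsProjOn

theorem stmt7_general {E : Type*} [NormedAddCommGroup E] [InnerProductSpace ℝ E]
    (Z : Set E)
    (D : ℝ) (hD : ∀ z ∈ Z, ∀ z' ∈ Z, ‖z - z'‖ ≤ D)
    (F : E → E) (L : ℝ) (hL : 0 < L)
    (hlip : ∀ z ∈ Z, ∀ z' ∈ Z, ‖F z - F z'‖ ≤ L * ‖z - z'‖)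
    (wstar : E) (hwstar : wstar ∈ Z)
    (hSVI : ∀ z ∈ Z, ⟪F wstar, z - wstar⟫ ≥ 0)
    (zhat : E) (hzhat : zhat ∈ Z) (zbar : E)
    (hproj : IsProjOn Z (zhat - (1 / (Real.sqrt 2 * L)) • F zhat) zbar) :
    ∀ z ∈ Z, ⟪F zbar, zbar - z⟫ ≤ D * L * (2 + Real.sqrt 2) * ‖zhat - wstar‖ := by
  intro z hz
  have hs : Real.sqrt 2 ^ 2 = 2 := Real.sq_sqrt zero_le_two
  have hs0 : 0 < Real.sqrt 2 := by positivity
  have hη : 0 < 1 / (Real.sqrt 2 * L) := by positivity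
  have hηL : (1 / (Real.sqrt 2 * L) * L) ^ 2 = 1 / 2 := by
    field_simp
    rw [hs]
  have hstep : ‖zhat - zbar‖ ≤ Real.sqrt 2 * ‖zhat - wstar‖ := by
    have h := hproj.norm_sub_sq_le_of_svi hη.le hwstar hSVI (hlip zhat hzhat wstar hwstar)
    rw [hηL] at h
    apply le_of_sq_le_sq _ (by positivity)
    nlinarith [sq_nonneg ‖zhat - wstar‖]
  calc ⟪F zbar, zbar - z⟫
      ≤ (L + (1 / (Real.sqrt 2 * L))⁻¹) * ‖zhat - zbar‖ * ‖zbar - z‖ :=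
        hproj.inner_sub_le_of_lipschitz hη hz (hlip zbar hproj.1 zhat hzhat)
    _ ≤ (L + Real.sqrt 2 * L) * (Real.sqrt 2 * ‖zhat - wstar‖) * D := by
        rw [one_div, inv_inv]
        gcongr
        exact hD zbar hproj.1 z hz
    _ = D * L * (2 + Real.sqrt 2) * ‖zhat - wstar‖ := by
        linear_combination D * L * ‖zhat - wstar‖ * hs

/-- For a monotone `L`-Lipschitz mapping `F` on a compact convex set `Z` of diameter `D` with
SVI solution `w*`, the point `z̄ = Proj_Z(ẑ - ηF(ẑ))` with `η = 1/(√2 L)` satisfies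
`max_{z∈Z} ⟨F(z̄), z̄ - z⟩ ≤ D L (2 + √2)‖ẑ - w*‖`. -/
theorem stmt7 {E : Type*} [NormedAddCommGroup E] [InnerProductSpace ℝ E]
    (Z : Set E) (hZconv : Convex ℝ Z) (hZcomp : IsCompact Z)
    (D : ℝ) (hD : ∀ z ∈ Z, ∀ z' ∈ Z, ‖z - z'‖ ≤ D)
    (F : E → E) (L : ℝ) (hL : 0 < L)
    (hmono : ∀ z ∈ Z, ∀ z' ∈ Z, ⟪F z - F z', z - z'⟫ ≥ 0)
    (hlip : ∀ z ∈ Z, ∀ z' ∈ Z, ‖F z - F z'‖ ≤ L * ‖z - z'‖)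
    (wstar : E) (hwstar : wstar ∈ Z)
    (hSVI : ∀ z ∈ Z, ⟪F wstar, z - wstar⟫ ≥ 0)
    (zhat : E) (hzhat : zhat ∈ Z) (zbar : E)
    (hproj : IsProjOn Z (zhat - (1 / (Real.sqrt 2 * L)) • F zhat) zbar) :
    ∀ z ∈ Z, ⟪F zbar, zbar - z⟫ ≤ D * L * (2 + Real.sqrt 2) * ‖zhat - wstar‖ :=
  stmt7_general Z D hD F L hL hlip wstar hwstar hSVI zhat hzhat zbar hproj
end

section
/- Let F : Z → ℝ^d be μ-strongly monotone and L-Lipschitz on a compact convex set Z of diameter D, with SVI solution w*. The projected gradient method with step size η = μ/(2L²) satisfies max_{z∈Z} ⟨F(z^{(T)}), z^{(T)} − z⟩ ≤ 4 D² L β exp(−(T−1)/(4β²)), where β = L/μ ≥ 1. -/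
open RealInnerProductSpace

/-!
Let `w` be the SVI solution and `β = L/μ`. The variational inequality makes `w` a fixed point of
the projected step and the projection is nonexpansive, so the distance to `w` shrinks at least as
much as under the forward step `z ↦ z - η F z`, which for `η = μ/(2L²)` contracts by
`√(1 - 3/(4β²)) ≤ exp(-1/(4β²))`. Hence `‖z⁽ᵀ⁾ - w‖ ≤ exp(-(T-1)/(4β²)) D`. The projection
inequality defining `z⁽ᵀ⁾` bounds the gap `⟪F z⁽ᵀ⁾, z⁽ᵀ⁾ - z⟫` by `(2L + 1/η) D ‖z⁽ᵀ⁾ - w‖`, and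
`2L + 1/η ≤ 4Lβ`.
-/

section ProjectedGradient

variable {E : Type*} [NormedAddCommGroup E] [InnerProductSpace ℝ E] {Z : Set E}

lemma IsProjOn.inner_sub_nonneg {x p w : E} (hp : IsProjOn Z x p) (hw : w ∈ Z) :
    0 ≤ ⟪x - p, p - w⟫ := by
  have h := hp.2 w hw
  rw [← neg_sub p w, inner_neg_right] at h
  linarith

lemma IsProjOn.smul_inner_le {x v p w : E} {η : ℝ} (hp : IsProjOn Z (x - η • v) p)
    (hw : w ∈ Z) : η * ⟪v, p - w⟫ ≤ ⟪x - p, p - w⟫ := by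
  have h := hp.inner_sub_nonneg hw
  rw [sub_right_comm, inner_sub_left, real_inner_smul_left] at h
  linarith

lemma IsProjOn.norm_sub_le_of_inner_nonneg {x u v p w : E} {η : ℝ}
    (hp : IsProjOn Z (x - η • u) p) (hw : w ∈ Z) (hη : 0 ≤ η) (hv : 0 ≤ ⟪v, p - w⟫) :
    ‖p - w‖ ≤ ‖(x - η • u) - (w - η • v)‖ := by
  have hsplit : (x - η • u) - (w - η • v) = (p - w) + ((x - η • u) - p) + η • v := by abel
  have hsq : ‖p - w‖ ^ 2 ≤ ⟪(x - η • u) - (w - η • v), p - w⟫ := by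
    rw [hsplit, inner_add_left, inner_add_left, real_inner_smul_left, real_inner_self_eq_norm_sq]
    nlinarith [hp.inner_sub_nonneg hw]
  have hcs := real_inner_le_norm ((x - η • u) - (w - η • v)) (p - w)
  nlinarith [norm_nonneg (p - w), norm_nonneg ((x - η • u) - (w - η • v))]

lemma norm_sub_smul_sub_sq_le {x w u v : E} {η μ L : ℝ} (hη : 0 ≤ η)
    (hmono : μ * ‖x - w‖ ^ 2 ≤ ⟪u - v, x - w⟫) (hlip : ‖u - v‖ ≤ L * ‖x - w‖) :
    ‖(x - η • u) - (w - η • v)‖ ^ 2 ≤ (1 - 2 * η * μ + η ^ 2 * L ^ 2) * ‖x - w‖ ^ 2 := by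
  have hxy : (x - η • u) - (w - η • v) = (x - w) - η • (u - v) := by
    rw [smul_sub]; abel
  have hlip2 : ‖u - v‖ ^ 2 ≤ L ^ 2 * ‖x - w‖ ^ 2 := by
    rw [← mul_pow]; exact pow_le_pow_left₀ (norm_nonneg _) hlip 2
  rw [hxy, norm_sub_sq_real, real_inner_smul_right, norm_smul, mul_pow, Real.norm_eq_abs,
    sq_abs, real_inner_comm]
  nlinarith [mul_le_mul_of_nonneg_left hlip2 (sq_nonneg η)]

/-- For `η = μ/(2L²)` the contraction factor `1 - 2ημ + η²L²` equals `1 - 3/(4β²)`, which is at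
most `1 - 1/(2β²) ≤ exp(-1/(2β²))`. -/
lemma contraction_factor_le_exp_sq {μ L : ℝ} (hμ : 0 < μ) (hμL : μ ≤ L) :
    1 - 2 * (μ / (2 * L ^ 2)) * μ + (μ / (2 * L ^ 2)) ^ 2 * L ^ 2
      ≤ Real.exp (-1 / (4 * (L / μ) ^ 2)) ^ 2 := by
  have hL : 0 < L := hμ.trans_le hμL
  have hfactor : 1 - 2 * (μ / (2 * L ^ 2)) * μ + (μ / (2 * L ^ 2)) ^ 2 * L ^ 2
      = 1 - 3 / 2 * (μ / L) ^ 2 / 2 := by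
    field_simp; ring
  have hexp : Real.exp (-1 / (4 * (L / μ) ^ 2)) ^ 2 = Real.exp (-((μ / L) ^ 2 / 2)) := by
    rw [← Real.exp_nat_mul]; congr 1; field_simp; ring
  rw [hfactor, hexp]
  nlinarith [Real.add_one_le_exp (-((μ / L) ^ 2 / 2)), sq_nonneg (μ / L)]

lemma IsProjOn.norm_sub_le_exp_mul {F : E → E} {μ L : ℝ} (hμ : 0 < μ) (hμL : μ ≤ L)
    (hsm : ∀ z ∈ Z, ∀ z' ∈ Z, ⟪F z - F z', z - z'⟫ ≥ μ * ‖z - z'‖ ^ 2)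
    (hlip : ∀ z ∈ Z, ∀ z' ∈ Z, ‖F z - F z'‖ ≤ L * ‖z - z'‖)
    {w : E} (hw : w ∈ Z) (hSVI : ∀ z ∈ Z, ⟪F w, z - w⟫ ≥ 0)
    {x p : E} (hx : x ∈ Z) (hp : IsProjOn Z (x - (μ / (2 * L ^ 2)) • F x) p) :
    ‖p - w‖ ≤ Real.exp (-1 / (4 * (L / μ) ^ 2)) * ‖x - w‖ := by
  have hη : 0 ≤ μ / (2 * L ^ 2) := by positivity
  have hproj := hp.norm_sub_le_of_inner_nonneg hw hη (hSVI p hp.1)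
  have hstep := norm_sub_smul_sub_sq_le hη (hsm x hx w hw) (hlip x hx w hw)
  have hfactor := contraction_factor_le_exp_sq hμ hμL
  apply le_of_sq_le_sq _ (by positivity)
  calc ‖p - w‖ ^ 2 ≤ ‖(x - (μ / (2 * L ^ 2)) • F x) - (w - (μ / (2 * L ^ 2)) • F w)‖ ^ 2 :=
        pow_le_pow_left₀ (norm_nonneg _) hproj 2
    _ ≤ _ := hstep
    _ ≤ Real.exp (-1 / (4 * (L / μ) ^ 2)) ^ 2 * ‖x - w‖ ^ 2 :=
        mul_le_mul_of_nonneg_right hfactor (sq_nonneg _)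
    _ = _ := by ring

lemma IsProjOn.inner_sub_le_mul_norm_sub {F : E → E} {L D η : ℝ} (hL : 0 ≤ L) (hη : 0 < η)
    (hD : ∀ z ∈ Z, ∀ z' ∈ Z, ‖z - z'‖ ≤ D)
    (hlip : ∀ z ∈ Z, ∀ z' ∈ Z, ‖F z - F z'‖ ≤ L * ‖z - z'‖)
    {w : E} (hw : w ∈ Z) (hSVI : ∀ z ∈ Z, ⟪F w, z - w⟫ ≥ 0)
    {x p z : E} (hx : x ∈ Z) (hz : z ∈ Z) (hp : IsProjOn Z (x - η • F x) p) :
    ⟪F p, p - z⟫ ≤ (2 * L + η⁻¹) * D * ‖p - w‖ := by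
  have hdecomp : ⟪F p, p - z⟫ = ⟪F p - F w, p - z⟫ + ⟪F w - F x, p - w⟫
      + ⟪F x, p - w⟫ - ⟪F w, z - w⟫ := by
    simp only [inner_sub_left, inner_sub_right]; ring
  have hpw : ⟪F p - F w, p - z⟫ ≤ L * ‖p - w‖ * D :=
    (real_inner_le_norm _ _).trans <|
      mul_le_mul (hlip p hp.1 w hw) (hD p hp.1 z hz) (norm_nonneg _) (by positivity)
  have hwx : ⟪F w - F x, p - w⟫ ≤ L * D * ‖p - w‖ :=
    (real_inner_le_norm _ _).trans <| mul_le_mul_of_nonneg_right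
      ((hlip w hw x hx).trans (mul_le_mul_of_nonneg_left (hD w hw x hx) hL)) (norm_nonneg _)
  have hx' : ⟪F x, p - w⟫ ≤ η⁻¹ * (D * ‖p - w‖) := by
    have hxp : ⟪x - p, p - w⟫ ≤ D * ‖p - w‖ := by
      have h := real_inner_le_norm (x - w) (p - w)
      rw [show x - p = (x - w) - (p - w) by abel, inner_sub_left, real_inner_self_eq_norm_sq]
      nlinarith [mul_le_mul_of_nonneg_right (hD x hx w hw) (norm_nonneg (p - w))]
    rw [le_inv_mul_iff₀ hη]
    exact (hp.smul_inner_le hw).trans hxp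
  have hwz := hSVI z hz
  rw [hdecomp]
  nlinarith

end ProjectedGradient

theorem stmt9_general {E : Type*} [NormedAddCommGroup E] [InnerProductSpace ℝ E]
    (Z : Set E)
    (D : ℝ) (hD : ∀ z ∈ Z, ∀ z' ∈ Z, ‖z - z'‖ ≤ D)
    (F : E → E) (μ L : ℝ) (hμ : 0 < μ) (hL : 0 < L) (hβ : 1 ≤ L / μ)
    (hsm : ∀ z ∈ Z, ∀ z' ∈ Z, ⟪F z - F z', z - z'⟫ ≥ μ * ‖z - z'‖ ^ 2)
    (hlip : ∀ z ∈ Z, ∀ z' ∈ Z, ‖F z - F z'‖ ≤ L * ‖z - z'‖)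
    (wstar : E) (hwstar : wstar ∈ Z)
    (hSVI : ∀ z ∈ Z, ⟪F wstar, z - wstar⟫ ≥ 0)
    (zs : ℕ → E) (hz0 : zs 0 ∈ Z)
    (hiter : ∀ t : ℕ, IsProjOn Z (zs t - (μ / (2 * L ^ 2)) • F (zs t)) (zs (t + 1)))
    (T : ℕ) (hT : 1 ≤ T) :
    ∀ z ∈ Z, ⟪F (zs T), zs T - z⟫
      ≤ 4 * D ^ 2 * L * (L / μ) * Real.exp (-((T : ℝ) - 1) / (4 * (L / μ) ^ 2)) := by
  intro z hz
  obtain ⟨k, rfl⟩ : ∃ k, T = k + 1 := ⟨T - 1, by omega⟩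
  have hμL : μ ≤ L := by rwa [le_div_iff₀ hμ, one_mul] at hβ
  have hmem : ∀ t, zs t ∈ Z := fun t => t.casesOn hz0 fun n => (hiter n).1
  set q := Real.exp (-1 / (4 * (L / μ) ^ 2))
  have hdist : ‖zs (k + 1) - wstar‖ ≤ q ^ k * D := by
    have h := le_geom (u := fun t => ‖zs (t + 1) - wstar‖) (Real.exp_nonneg _) k fun t _ =>
      (hiter (t + 1)).norm_sub_le_exp_mul hμ hμL hsm hlip hwstar hSVI (hmem (t + 1))
    exact h.trans (mul_le_mul_of_nonneg_left (hD _ (hmem 1) _ hwstar) (by positivity))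
  have hgap := (hiter k).inner_sub_le_mul_norm_sub hL.le (by positivity) hD hlip hwstar hSVI
    (hmem k) hz
  have hcoef : 2 * L + (μ / (2 * L ^ 2))⁻¹ ≤ 4 * L * (L / μ) := by
    rw [inv_div, show 2 * L ^ 2 / μ = 2 * L * (L / μ) by ring]
    nlinarith
  have hqk : q ^ k = Real.exp (-(((k + 1 : ℕ) : ℝ) - 1) / (4 * (L / μ) ^ 2)) := by
    rw [← Real.exp_nat_mul]; push_cast; ring_nf
  have hD0 : 0 ≤ D := (norm_nonneg _).trans (hD _ hwstar _ hwstar)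
  calc ⟪F (zs (k + 1)), zs (k + 1) - z⟫
      ≤ (2 * L + (μ / (2 * L ^ 2))⁻¹) * D * ‖zs (k + 1) - wstar‖ := hgap
    _ ≤ 4 * L * (L / μ) * D * (q ^ k * D) := by gcongr
    _ = _ := by rw [hqk]; ring

/-- For a `μ`-strongly monotone `L`-Lipschitz mapping on a compact convex set of diameter `D`,
the projected gradient method with step size `η = μ/(2L²)` satisfies
`max_{z∈Z} ⟨F(z⁽ᵀ⁾), z⁽ᵀ⁾ - z⟩ ≤ 4D²Lβ exp(-(T-1)/(4β²))`, `β = L/μ ≥ 1`. -/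
theorem stmt9 {E : Type*} [NormedAddCommGroup E] [InnerProductSpace ℝ E]
    (Z : Set E) (hZconv : Convex ℝ Z) (hZcomp : IsCompact Z)
    (D : ℝ) (hD : ∀ z ∈ Z, ∀ z' ∈ Z, ‖z - z'‖ ≤ D)
    (F : E → E) (μ L : ℝ) (hμ : 0 < μ) (hL : 0 < L) (hβ : 1 ≤ L / μ)
    (hsm : ∀ z ∈ Z, ∀ z' ∈ Z, ⟪F z - F z', z - z'⟫ ≥ μ * ‖z - z'‖ ^ 2)
    (hlip : ∀ z ∈ Z, ∀ z' ∈ Z, ‖F z - F z'‖ ≤ L * ‖z - z'‖)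
    (wstar : E) (hwstar : wstar ∈ Z)
    (hSVI : ∀ z ∈ Z, ⟪F wstar, z - wstar⟫ ≥ 0)
    (zs : ℕ → E) (hz0 : zs 0 ∈ Z)
    (hiter : ∀ t : ℕ, IsProjOn Z (zs t - (μ / (2 * L ^ 2)) • F (zs t)) (zs (t + 1)))
    (T : ℕ) (hT : 1 ≤ T) :
    ∀ z ∈ Z, ⟪F (zs T), zs T - z⟫
      ≤ 4 * D ^ 2 * L * (L / μ) * Real.exp (-((T : ℝ) - 1) / (4 * (L / μ) ^ 2)) :=
  stmt9_general Z D hD F μ L hμ hL hβ hsm hlip wstar hwstar hSVI zs hz0 hiter T hT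
end

section
/- Let F : Z → ℝ^d be μ-strongly monotone and L-Lipschitz on a convex set Z. The extragradient iteration z^{(t)} = Proj_Z(w^{(t)} − η F(w^{(t)})), w^{(t+1)} = Proj_Z(w^{(t)} − η F(z^{(t)})) with η = 1/(4L) satisfies ‖w^{(t+1)} − w*‖² ≤ (1 − μ/(4L)) ‖w^{(t)} − w*‖², where w* is the unique solution of SVI(F,Z). -/
/-!
The two projection inequalities defining `z` and `w'`, rewritten with the three-point identity
`2⟪x - y, z - y⟫ = ‖x - y‖² + ‖z - y‖² - ‖x - z‖²`, give the classical extragradient estimate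
`‖w' - w*‖² ≤ ‖w - w*‖² - ‖w - z‖² - ‖w' - z‖² + 2ηL‖w - z‖‖w' - z‖ - 2η⟪F z, z - w*⟫`.
Strong monotonicity together with the variational inequality at `w*` bounds `⟪F z, z - w*⟫`
below by `μ‖z - w*‖²`. With `ηL = 1/4` the cross term is absorbed by the squares, and
`‖w - w*‖² ≤ 2‖w - z‖² + 2‖z - w*‖²` turns the remaining negative terms into `-ημ‖w - w*‖²`;
this last step needs `ημ ≤ 1/4`, i.e. `μ ≤ L`, which holds as soon as `w ≠ w*`.
-/

open RealInnerProductSpace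

section Extragradient

variable {E : Type*} [NormedAddCommGroup E] [InnerProductSpace ℝ E]

theorem two_inner_sub_sub_eq (x y z : E) :
    2 * ⟪x - y, z - y⟫ = ‖x - y‖ ^ 2 + ‖z - y‖ ^ 2 - ‖x - z‖ ^ 2 := by
  have h := norm_sub_sq_real (x - y) (z - y)
  rw [sub_sub_sub_cancel_right] at h
  linarith

theorem IsProjOn.inner_sub_le {Z : Set E} {x g p : E} {η : ℝ}
    (hp : IsProjOn Z (x - η • g) p) {z : E} (hz : z ∈ Z) :
    ⟪x - p, z - p⟫ ≤ η * ⟪g, z - p⟫ := by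
  have h := hp.2 z hz
  rwa [sub_right_comm, inner_sub_left, real_inner_smul_left, sub_nonpos] at h

theorem le_of_strongMono_of_lipschitz {F : E → E} {μ L : ℝ} {x y : E} (hxy : x ≠ y)
    (hsm : μ * ‖x - y‖ ^ 2 ≤ ⟪F x - F y, x - y⟫) (hlip : ‖F x - F y‖ ≤ L * ‖x - y‖) :
    μ ≤ L := by
  have hpos : 0 < ‖x - y‖ ^ 2 := by positivity [sub_ne_zero.mpr hxy]
  refine le_of_mul_le_mul_right ?_ hpos
  calc μ * ‖x - y‖ ^ 2 ≤ ⟪F x - F y, x - y⟫ := hsm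
    _ ≤ ‖F x - F y‖ * ‖x - y‖ := real_inner_le_norm _ _
    _ ≤ L * ‖x - y‖ * ‖x - y‖ := by gcongr
    _ = L * ‖x - y‖ ^ 2 := by ring

theorem extragradient_step {Z : Set E} {F : E → E} {η L : ℝ} {w z w' wstar : E}
    (hη : 0 ≤ η) (hlip : ‖F z - F w‖ ≤ L * ‖w - z‖) (hwstar : wstar ∈ Z)
    (hz : IsProjOn Z (w - η • F w) z) (hw' : IsProjOn Z (w - η • F z) w') :
    ‖w' - wstar‖ ^ 2 ≤ ‖w - wstar‖ ^ 2 - ‖w - z‖ ^ 2 - ‖w' - z‖ ^ 2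
      + 2 * η * L * ‖w - z‖ * ‖w' - z‖ - 2 * η * ⟪F z, z - wstar⟫ := by
  have hproj₁ := hw'.inner_sub_le hwstar
  have hproj₂ := hz.inner_sub_le hw'.1
  have hcs : ⟪F z - F w, z - w'⟫ ≤ L * ‖w - z‖ * ‖w' - z‖ :=
    calc ⟪F z - F w, z - w'⟫ ≤ ‖F z - F w‖ * ‖w' - z‖ := by
          rw [norm_sub_rev w' z]; exact real_inner_le_norm _ _
      _ ≤ L * ‖w - z‖ * ‖w' - z‖ := by gcongr
  have hsplit : ⟪F z, wstar - w'⟫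
      = -⟪F z, z - wstar⟫ + ⟪F z - F w, z - w'⟫ - ⟪F w, w' - z⟫ := by
    simp only [inner_sub_left, inner_sub_right]; ring
  rw [hsplit] at hproj₁
  rw [norm_sub_rev w' wstar]
  linarith [two_inner_sub_sub_eq w w' wstar, two_inner_sub_sub_eq w z w',
    mul_le_mul_of_nonneg_left hcs hη]

theorem extragradient_contraction {Z : Set E} {F : E → E} {μ L : ℝ} (hμ : 0 ≤ μ) (hL : 0 < L)
    (hsm : ∀ z ∈ Z, ∀ z' ∈ Z, ⟪F z - F z', z - z'⟫ ≥ μ * ‖z - z'‖ ^ 2)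
    (hlip : ∀ z ∈ Z, ∀ z' ∈ Z, ‖F z - F z'‖ ≤ L * ‖z - z'‖)
    {wstar : E} (hwstar : wstar ∈ Z) (hSVI : ∀ z ∈ Z, ⟪F wstar, z - wstar⟫ ≥ 0)
    {w z w' : E} (hw : w ∈ Z) (hz : IsProjOn Z (w - (1 / (4 * L)) • F w) z)
    (hw' : IsProjOn Z (w - (1 / (4 * L)) • F z) w') :
    ‖w' - wstar‖ ^ 2 ≤ (1 - μ / (4 * L)) * ‖w - wstar‖ ^ 2 := by
  set η := 1 / (4 * L) with hη
  have hη₀ : 0 ≤ η := by positivity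
  have hstep := extragradient_step (L := L) hη₀
    (by rw [norm_sub_rev]; exact hlip w hw z hz.1) hwstar hz hw'
  have hηL : 2 * η * L = 1 / 2 := by rw [hη]; field_simp; norm_num
  have hz_star : μ * ‖z - wstar‖ ^ 2 ≤ ⟪F z, z - wstar⟫ := by
    have := hsm z hz.1 wstar hwstar
    rw [inner_sub_left] at this
    linarith [hSVI z hz.1]
  have htri : ‖w - wstar‖ ^ 2 ≤ 2 * ‖w - z‖ ^ 2 + 2 * ‖z - wstar‖ ^ 2 := by
    have := norm_sub_le_norm_sub_add_norm_sub w z wstar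
    nlinarith [sq_nonneg (‖w - z‖ - ‖z - wstar‖), norm_nonneg (w - wstar)]
  have hk : μ / (4 * L) = η * μ := by rw [hη]; ring
  have hk₀ : 0 ≤ η * μ := by positivity
  have hdescent : ‖w' - wstar‖ ^ 2
      ≤ ‖w - wstar‖ ^ 2 - 3 / 4 * ‖w - z‖ ^ 2 - 2 * (η * μ) * ‖z - wstar‖ ^ 2 := by
    rw [hηL] at hstep
    nlinarith [sq_nonneg (‖w - z‖ - ‖w' - z‖), mul_le_mul_of_nonneg_left hz_star hη₀]
  rw [hk]
  rcases eq_or_ne w wstar with rfl | hne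
  · simp only [sub_self, norm_zero] at hdescent ⊢
    nlinarith [mul_nonneg hk₀ (sq_nonneg ‖z - w‖)]
  · have hμL := le_of_strongMono_of_lipschitz hne (hsm w hw wstar hwstar)
      (hlip w hw wstar hwstar)
    have hk₁ : η * μ ≤ 1 / 4 := by
      rw [hη, div_mul_eq_mul_div, one_mul, div_le_iff₀ (by positivity)]
      linarith
    nlinarith [mul_le_mul_of_nonneg_left htri hk₀, sq_nonneg ‖w - z‖]

end Extragradient

theorem stmt10_general {E : Type*} [NormedAddCommGroup E] [InnerProductSpace ℝ E]
    (Z : Set E) (F : E → E)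
    (μ L : ℝ) (hμ : 0 < μ) (hL : 0 < L)
    (hsm : ∀ z ∈ Z, ∀ z' ∈ Z, ⟪F z - F z', z - z'⟫ ≥ μ * ‖z - z'‖ ^ 2)
    (hlip : ∀ z ∈ Z, ∀ z' ∈ Z, ‖F z - F z'‖ ≤ L * ‖z - z'‖)
    (wstar : E) (hwstar : wstar ∈ Z)
    (hSVI : ∀ z ∈ Z, ⟪F wstar, z - wstar⟫ ≥ 0)
    (ws zs : ℕ → E) (hw0 : ws 0 ∈ Z)
    (hiter1 : ∀ t : ℕ, IsProjOn Z (ws t - (1 / (4 * L)) • F (ws t)) (zs t))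
    (hiter2 : ∀ t : ℕ, IsProjOn Z (ws t - (1 / (4 * L)) • F (zs t)) (ws (t + 1))) :
    ∀ t : ℕ, ‖ws (t + 1) - wstar‖ ^ 2 ≤ (1 - μ / (4 * L)) * ‖ws t - wstar‖ ^ 2 := by
  have hws : ∀ t, ws t ∈ Z
    | 0 => hw0
    | t + 1 => (hiter2 t).1
  intro t
  exact extragradient_contraction hμ.le hL hsm hlip hwstar hSVI (hws t) (hiter1 t) (hiter2 t)

/-- For a `μ`-strongly monotone `L`-Lipschitz mapping, the extragradient iteration with
`η = 1/(4L)` satisfies `‖w⁽ᵗ⁺¹⁾ - w*‖² ≤ (1 - μ/(4L))‖w⁽ᵗ⁾ - w*‖²`. -/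
theorem stmt10 {E : Type*} [NormedAddCommGroup E] [InnerProductSpace ℝ E]
    (Z : Set E) (hZ : Convex ℝ Z) (F : E → E)
    (μ L : ℝ) (hμ : 0 < μ) (hL : 0 < L)
    (hsm : ∀ z ∈ Z, ∀ z' ∈ Z, ⟪F z - F z', z - z'⟫ ≥ μ * ‖z - z'‖ ^ 2)
    (hlip : ∀ z ∈ Z, ∀ z' ∈ Z, ‖F z - F z'‖ ≤ L * ‖z - z'‖)
    (wstar : E) (hwstar : wstar ∈ Z)
    (hSVI : ∀ z ∈ Z, ⟪F wstar, z - wstar⟫ ≥ 0)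
    (ws zs : ℕ → E) (hw0 : ws 0 ∈ Z)
    (hiter1 : ∀ t : ℕ, IsProjOn Z (ws t - (1 / (4 * L)) • F (ws t)) (zs t))
    (hiter2 : ∀ t : ℕ, IsProjOn Z (ws t - (1 / (4 * L)) • F (zs t)) (ws (t + 1))) :
    ∀ t : ℕ, ‖ws (t + 1) - wstar‖ ^ 2 ≤ (1 - μ / (4 * L)) * ‖ws t - wstar‖ ^ 2 :=
  stmt10_general Z F μ L hμ hL hsm hlip wstar hwstar hSVI ws zs hw0 hiter1 hiter2
end

section
/- Let F : Z → ℝ^d be L-Lipschitz on a convex set Z, let w ∈ Z be an ε-gap solution of SVI(F,Z) (max_{z∈Z}⟨F(w), w − z⟩ ≤ ε), let 0 < γ < 1/L, and let ŵ be the unique solution of SVI(F_w^γ, Z) where F_w^γ(z) = F(z) + (1/γ)(z − w). Then ‖w − ŵ‖ ≤ √(ε/(1/γ − L)). -/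
/-!
Testing the SVI of `F_w^γ` at `z = w` gives `(1/γ)‖w - ŵ‖² ≤ ⟪F ŵ, w - ŵ⟫`. Splitting
`F ŵ = F w + (F ŵ - F w)`, the first part is at most `ε` by the gap bound at `z = ŵ`, and the
second at most `L‖w - ŵ‖²` by Cauchy–Schwarz and the Lipschitz bound. Hence
`(1/γ - L)‖w - ŵ‖² ≤ ε`.
-/

open RealInnerProductSpace

lemma sub_pos_of_lt_one_div {γ L : ℝ} (hγ0 : 0 < γ) (hγ : γ < 1 / L) : 0 < 1 / γ - L := by
  rcases le_or_gt L 0 with hL | hL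
  · have : 0 < 1 / γ := one_div_pos.2 hγ0
    linarith
  · rw [sub_pos, lt_one_div hL hγ0]
    exact hγ

section InnerProduct

variable {E : Type*} [NormedAddCommGroup E] [InnerProductSpace ℝ E]

lemma real_inner_le_mul_norm_sq_of_norm_le {a v : E} {L : ℝ} (h : ‖a‖ ≤ L * ‖v‖) :
    ⟪a, v⟫ ≤ L * ‖v‖ ^ 2 :=
  calc ⟪a, v⟫ ≤ ‖a‖ * ‖v‖ := real_inner_le_norm a v
    _ ≤ L * ‖v‖ * ‖v‖ := mul_le_mul_of_nonneg_right h (norm_nonneg v)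
    _ = L * ‖v‖ ^ 2 := by ring

lemma mul_norm_sq_le_inner_of_inner_add_smul_nonneg {g w w' : E} {c : ℝ}
    (h : 0 ≤ ⟪g + c • (w' - w), w - w'⟫) : c * ‖w - w'‖ ^ 2 ≤ ⟪g, w - w'⟫ := by
  rw [← neg_sub w w', inner_add_left, inner_smul_left, inner_neg_left,
    real_inner_self_eq_norm_sq] at h
  simp only [RCLike.conj_to_real] at h
  linarith

end InnerProduct

theorem stmt14_general {E : Type*} [NormedAddCommGroup E] [InnerProductSpace ℝ E]
    (Z : Set E) (F : E → E) (L : ℝ)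
    (hlip : ∀ z ∈ Z, ∀ z' ∈ Z, ‖F z - F z'‖ ≤ L * ‖z - z'‖)
    (ε : ℝ)
    (w : E) (hw : w ∈ Z)
    (hgap : ∀ z ∈ Z, ⟪F w, w - z⟫ ≤ ε)
    (γ : ℝ) (hγ0 : 0 < γ) (hγ : γ < 1 / L)
    (what : E) (hwhat : what ∈ Z)
    (hSVI : ∀ z ∈ Z, ⟪F what + (1 / γ) • (what - w), z - what⟫ ≥ 0) :
    ‖w - what‖ ≤ Real.sqrt (ε / (1 / γ - L)) := by
  have hc : 0 < 1 / γ - L := sub_pos_of_lt_one_div hγ0 hγ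
  have hprox : 1 / γ * ‖w - what‖ ^ 2 ≤ ⟪F what, w - what⟫ :=
    mul_norm_sq_le_inner_of_inner_add_smul_nonneg (hSVI w hw)
  have hlip' : ⟪F what - F w, w - what⟫ ≤ L * ‖w - what‖ ^ 2 :=
    real_inner_le_mul_norm_sq_of_norm_le (by rw [norm_sub_rev w]; exact hlip what hwhat w hw)
  have hgap' : ⟪F w, w - what⟫ ≤ ε := hgap what hwhat
  rw [inner_sub_left] at hlip'
  refine Real.le_sqrt_of_sq_le ((le_div_iff₀ hc).2 ?_)
  linarith

/-- If `w` is an `ε`-gap solution of `SVI(F,Z)` for an `L`-Lipschitz `F` and `ŵ` is the unique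
solution of `SVI(F_w^γ, Z)` for `0 < γ < 1/L`, then `‖w - ŵ‖ ≤ √(ε/(1/γ - L))`. -/
theorem stmt14 {E : Type*} [NormedAddCommGroup E] [InnerProductSpace ℝ E]
    (Z : Set E) (hZ : Convex ℝ Z) (F : E → E) (L : ℝ) (hL : 0 < L)
    (hlip : ∀ z ∈ Z, ∀ z' ∈ Z, ‖F z - F z'‖ ≤ L * ‖z - z'‖)
    (ε : ℝ) (hε : 0 < ε)
    (w : E) (hw : w ∈ Z)
    (hgap : ∀ z ∈ Z, ⟪F w, w - z⟫ ≤ ε)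
    (γ : ℝ) (hγ0 : 0 < γ) (hγ : γ < 1 / L)
    (what : E) (hwhat : what ∈ Z)
    (hSVI : ∀ z ∈ Z, ⟪F what + (1 / γ) • (what - w), z - what⟫ ≥ 0) :
    ‖w - what‖ ≤ Real.sqrt (ε / (1 / γ - L)) :=
  stmt14_general Z F L hlip ε w hw hgap γ hγ0 hγ what hwhat hSVI
end
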